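/- Let f₁, f₂ : ℝ^K → Δ^K be two softmax outputs, i.e., fⱼ(x)ᵢ = exp(xᵢ)/Σₖ exp(xₖ). Then for any logit vectors u, v ∈ ℝ^K, ‖softmax(u) - softmax(v)‖_∞ ≤ ‖u - v‖_∞. -/
import Mathlib


open Real Finset

/-- Softmax on `ℝ^K`. -/
noncomputable def softmax {K : ℕ} (u : Fin K → ℝ) : Fin K → ℝ :=
  fun i => Real.exp (u i) / ∑ k, Real.exp (u k)

lemma exp_aux_ineq (t : ℝ) (ht : 0 ≤ t) :
    Real.exp (2 * t) - 1 ≤ t * (Real.exp t + 1) ^ 2 := by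
  have h1 : -t + 1 ≤ Real.exp (-t) := Real.add_one_le_exp (-t)
  have h2 : Real.exp t * Real.exp (-t) = 1 := by
    rw [← Real.exp_add]; simp
  have h3 : Real.exp (2 * t) = Real.exp t * Real.exp t := by
    rw [← Real.exp_add]; ring_nf
  nlinarith [Real.exp_pos t, Real.exp_pos (-t)]

lemma frac_diff (A R t : ℝ) (hA : 0 < A) (hR : 0 ≤ R) (ht : 0 ≤ t) :
    A * Real.exp (2 * t) / (A * Real.exp (2 * t) + R) - A / (A + R) ≤ t := by
  have hE : Real.exp (2 * t) = Real.exp t * Real.exp t := by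
    rw [← Real.exp_add]; ring_nf
  have he : 0 < Real.exp t := Real.exp_pos t
  have hd1 : 0 < A * Real.exp (2 * t) + R := by positivity
  have hd2 : 0 < A + R := by positivity
  rw [div_sub_div _ _ (ne_of_gt hd1) (ne_of_gt hd2), div_le_iff₀ (by positivity)]
  have key := exp_aux_ineq t ht
  rw [hE] at key ⊢
  nlinarith [sq_nonneg (A * Real.exp t - R), mul_nonneg ht (sq_nonneg (A * Real.exp t - R)),
    mul_le_mul_of_nonneg_left key (mul_nonneg hA.le hR), he.le, mul_nonneg hA.le hR]

lemma softmax_sub_le {K : ℕ} (u v : Fin K → ℝ) (t : ℝ) (ht : 0 ≤ t)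
    (h : ∀ j, |u j - v j| ≤ t) (i : Fin K) :
    softmax u i ≤ t + softmax v i := by
  classical
  set Ru : ℝ := ∑ k ∈ Finset.univ.erase i, Real.exp (u k) with hRu_def
  set Rv : ℝ := ∑ k ∈ Finset.univ.erase i, Real.exp (v k) with hRv_def
  have hRu : 0 ≤ Ru := Finset.sum_nonneg fun k _ => (Real.exp_pos _).le
  have hRv : 0 ≤ Rv := Finset.sum_nonneg fun k _ => (Real.exp_pos _).le
  have hsum_u : (∑ k, Real.exp (u k)) = Real.exp (u i) + Ru :=
    (Finset.add_sum_erase Finset.univ (fun k => Real.exp (u k)) (Finset.mem_univ i)).symm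
  have hsum_v : (∑ k, Real.exp (v k)) = Real.exp (v i) + Rv :=
    (Finset.add_sum_erase Finset.univ (fun k => Real.exp (v k)) (Finset.mem_univ i)).symm
  have hui : Real.exp (u i) ≤ Real.exp (v i + t) := by
    apply Real.exp_le_exp.mpr
    have := (abs_le.mp (h i)).2
    linarith
  have hRuv : Real.exp (-t) * Rv ≤ Ru := by
    rw [hRu_def, hRv_def, Finset.mul_sum]
    apply Finset.sum_le_sum
    intro k _
    rw [← Real.exp_add]
    apply Real.exp_le_exp.mpr
    have := (abs_le.mp (h k)).1
    linarith
  have he : 0 < Real.exp t := Real.exp_pos t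
  have hent : 0 < Real.exp (-t) := Real.exp_pos _
  -- step 1: softmax u i ≤ exp (v i + t) / (exp (v i + t) + exp (-t) * Rv)
  have hd0 : 0 < Real.exp (u i) + Ru := by positivity
  have hd1 : 0 < Real.exp (v i + t) + Real.exp (-t) * Rv := by positivity
  have step1 : softmax u i ≤ Real.exp (v i + t) / (Real.exp (v i + t) + Real.exp (-t) * Rv) := by
    rw [softmax, hsum_u, div_le_div_iff₀ hd0 hd1]
    have h1 : Real.exp (u i) * (Real.exp (-t) * Rv) ≤ Real.exp (v i + t) * Ru := by
      calc Real.exp (u i) * (Real.exp (-t) * Rv) ≤ Real.exp (v i + t) * (Real.exp (-t) * Rv) := by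
            apply mul_le_mul_of_nonneg_right hui (by positivity)
        _ ≤ Real.exp (v i + t) * Ru := by
            apply mul_le_mul_of_nonneg_left hRuv (Real.exp_pos _).le
    nlinarith
  -- step 2: rewrite the bound as A * exp (2t) / (A * exp (2t) + Rv)
  have step2 : Real.exp (v i + t) / (Real.exp (v i + t) + Real.exp (-t) * Rv)
      = Real.exp (v i) * Real.exp (2 * t) / (Real.exp (v i) * Real.exp (2 * t) + Rv) := by
    have hd2 : 0 < Real.exp (v i) * Real.exp (2 * t) + Rv := by positivity
    rw [div_eq_div_iff hd1.ne' hd2.ne']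
    have e3 : Real.exp (v i) * Real.exp (2 * t) * Real.exp (-t) = Real.exp (v i + t) := by
      rw [← Real.exp_add, ← Real.exp_add]; ring_nf
    linear_combination (-Rv) * e3
  -- step 3
  have step3 := frac_diff (Real.exp (v i)) Rv t (Real.exp_pos _) hRv ht
  have hsv : softmax v i = Real.exp (v i) / (Real.exp (v i) + Rv) := by
    rw [softmax, hsum_v]
  rw [hsv]
  calc softmax u i ≤ Real.exp (v i) * Real.exp (2 * t) / (Real.exp (v i) * Real.exp (2 * t) + Rv) := by
        rw [← step2]; exact step1
    _ ≤ t + Real.exp (v i) / (Real.exp (v i) + Rv) := by linarith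

/-- Softmax is 1-Lipschitz in the `ℓ∞` norm. -/
theorem softmax_linfty_lipschitz {K : ℕ} (hK : 0 < K) (u v : Fin K → ℝ) :
    ‖softmax u - softmax v‖ ≤ ‖u - v‖ := by
  have ht : (0:ℝ) ≤ ‖u - v‖ := norm_nonneg _
  have hj : ∀ j, |u j - v j| ≤ ‖u - v‖ := by
    intro j
    have := norm_le_pi_norm (u - v) j
    simpa [Real.norm_eq_abs] using this
  have hj' : ∀ j, |v j - u j| ≤ ‖u - v‖ := by
    intro j; rw [abs_sub_comm]; exact hj j
  rw [pi_norm_le_iff_of_nonneg ht]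
  intro i
  rw [Pi.sub_apply, Real.norm_eq_abs, abs_le]
  constructor
  · have := softmax_sub_le v u ‖u - v‖ ht hj' i
    linarith
  · have := softmax_sub_le u v ‖u - v‖ ht hj i
    linarith
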